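/- arXiv:1103.6278 — 6 statements merged into one kernel-verified Lean document; each statement's English description precedes it below -/
import Mathlib

section
/- For every point z in the upper half-plane ℍ, the set of unit complex numbers (c·z + d)² / |c·z + d|², as (c,d) ranges over all pairs of coprime integers, is dense in the unit circle {w ∈ ℂ : |w| = 1}. -/
open Complex

lemma rat_pair (z : ℂ) (q : ℚ) :
    ∃ c d : ℤ, IsCoprime c d ∧
      ((c : ℂ) * z + d) ^ 2 / ((‖(c : ℂ) * z + d‖ : ℂ)) ^ 2
        = (z + q) ^ 2 / ((‖z + q‖ : ℂ)) ^ 2 := by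
  refine ⟨(q.den : ℤ), q.num, ?_, ?_⟩
  · rw [Int.isCoprime_iff_gcd_eq_one, Int.gcd_comm]
    exact q.reduced
  · have hden : (0:ℝ) < (q.den : ℝ) := by exact_mod_cast q.pos
    have hdc : ((q.den : ℕ) : ℂ) ≠ 0 := Nat.cast_ne_zero.mpr q.den_ne_zero
    have hqq : (q.num : ℚ) = (q.den : ℚ) * q := by
      rw [mul_comm]
      exact (div_eq_iff (by exact_mod_cast q.den_ne_zero)).mp (Rat.num_div_den q)
    have h1 : ((q.den : ℤ) : ℂ) * z + (q.num : ℂ) = (q.den : ℂ) * (z + q) := by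
      have h2 : (q.num : ℂ) = (q.den : ℂ) * (q : ℂ) := by exact_mod_cast congrArg (Rat.cast (K := ℂ)) hqq
      push_cast
      push_cast at h2
      rw [h2]; ring
    have h3 : ((q.den : ℤ) : ℂ) = (q.den : ℂ) := by push_cast; ring
    rw [h3] at h1 ⊢
    rw [h1, norm_mul]
    have habs : ‖((q.den : ℂ))‖ = (q.den : ℝ) := by
      rw [Complex.norm_natCast]
    rw [habs]
    push_cast
    rw [mul_pow, mul_pow]
    rw [mul_div_mul_left]
    exact pow_ne_zero 2 hdc

/-- Main Theorem: for every point `z` in the upper half-plane, the unit complex numbers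
`(c·z + d)² / |c·z + d|²`, as `(c, d)` ranges over coprime pairs of integers, are dense
in the unit circle. -/
theorem dense_rotation_angles (z : ℂ) (hz : 0 < z.im) :
    ∀ w : ℂ, ‖w‖ = 1 → ∀ ε : ℝ, 0 < ε →
      ∃ c d : ℤ, IsCoprime c d ∧
        ‖((c : ℂ) * z + d) ^ 2 / ((‖(c : ℂ) * z + d‖ : ℂ)) ^ 2 - w‖
          < ε := by
  intro w hw ε hε
  by_cases hw1 : w = 1
  · refine ⟨0, 1, isCoprime_zero_left.mpr isUnit_one, ?_⟩
    simp [hw1, hε]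
  obtain ⟨u, hu⟩ : ∃ u : ℂ, u ^ 2 = w := by
    refine ⟨w ^ ((2:ℕ) : ℂ)⁻¹, ?_⟩
    simpa using Complex.cpow_nat_inv_pow w (two_ne_zero)
  have huim : u.im ≠ 0 := by
    intro h
    apply hw1
    have hre : u = (u.re : ℂ) := by
      apply Complex.ext <;> simp [h]
    have hwre : w = ((u.re ^ 2 : ℝ) : ℂ) := by rw [← hu, hre]; push_cast; simp
    have h1 : ‖w‖ = |u.re ^ 2| := by rw [hwre, Complex.norm_real, Real.norm_eq_abs]
    rw [hw, _root_.abs_of_nonneg (sq_nonneg u.re)] at h1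
    rw [hwre, ← h1]; norm_num
  set v : ℂ := if 0 < u.im then u else -u with hv
  have hvim : 0 < v.im := by
    rcases lt_or_gt_of_ne huim with h | h
    · simp only [hv, if_neg (not_lt.mpr h.le)]; simpa using h
    · simp only [hv, if_pos h]; exact h
  have hv2 : v ^ 2 = w := by
    by_cases h : 0 < u.im <;> simp [hv, h, hu]
  have habsv : ‖v‖ = 1 := by
    have h2 : ‖v‖ ^ 2 = 1 := by rw [← norm_pow, hv2, hw]
    nlinarith [norm_nonneg v]
  set a := v.re
  set b := v.im
  set x := z.re
  set y := z.im
  set t₀ : ℝ := y * a / b - x with ht₀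
  have hb : b ≠ 0 := ne_of_gt hvim
  have hyb : 0 < y / b := div_pos hz hvim
  have h1 : z + (t₀ : ℂ) = ((y / b : ℝ) : ℂ) * v := by
    apply Complex.ext
    · simp only [Complex.add_re, Complex.ofReal_re, Complex.mul_re, Complex.ofReal_im]
      field_simp [ht₀]
      rw [ht₀]; simp only [x, a]; field_simp; ring
    · simp only [Complex.add_im, Complex.ofReal_im, Complex.mul_im, Complex.ofReal_re]
      field_simp
      simp [y, b]
  set f : ℝ → ℂ := fun t => (z + (t : ℂ)) ^ 2 / ((‖z + t‖ : ℂ)) ^ 2 with hf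
  have habs0 : ‖z + (t₀ : ℂ)‖ = y / b := by
    rw [h1, norm_mul, Complex.norm_real, habsv, Real.norm_of_nonneg hyb.le, mul_one]
  have hne : ‖z + (t₀ : ℂ)‖ ≠ 0 := by rw [habs0]; exact ne_of_gt hyb
  have hybc : (((y / b : ℝ) : ℂ)) ^ 2 ≠ 0 :=
    pow_ne_zero 2 (Complex.ofReal_ne_zero.mpr (ne_of_gt hyb))
  have hft₀ : f t₀ = w := by
    simp only [hf]
    rw [habs0, h1, mul_pow, hv2, mul_comm, mul_div_assoc, div_self hybc, mul_one]
  have hcont : ContinuousAt f t₀ := by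
    apply ContinuousAt.div
    · fun_prop
    · apply ContinuousAt.pow
      apply Complex.continuous_ofReal.continuousAt.comp
      apply continuous_norm.continuousAt.comp
      fun_prop
    · exact pow_ne_zero 2 (Complex.ofReal_ne_zero.mpr hne)
  rw [Metric.continuousAt_iff] at hcont
  obtain ⟨δ, hδ, hball⟩ := hcont ε hε
  obtain ⟨q, hq⟩ := exists_rat_near t₀ hδ
  have hdist : dist (f q) (f t₀) < ε := by
    apply hball
    rw [Real.dist_eq, abs_sub_comm]
    exact hq
  obtain ⟨c, d, hcd, heq⟩ := rat_pair z q
  refine ⟨c, d, hcd, ?_⟩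
  have hlt : ‖f q - w‖ < ε := by
    rw [← hft₀]
    simpa [Complex.dist_eq] using hdist
  rw [heq]
  simpa [hf] using hlt
end

section
/- Let p, q, p', q' be integers with q > 0 and p·q' − p'·q = 1, and let A(z) = (−q'z + p')/(qz − p). Then A maps the Ford circle at p/q with its tangency point removed bijectively onto the horizontal line {w ∈ ℂ : Im w = 1}; that is, {A(z) : z ∈ ℂ, |z − (p/q + i/(2q²))| = 1/(2q²), z ≠ p/q} = {w ∈ ℂ : Im w = 1}. -/
open Complex

lemma ford_circle_iff (p q : ℤ) (hq : 0 < q) (z : ℂ) :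
    ‖z - ((p / q : ℂ) + I / (2 * (q : ℂ) ^ 2))‖ = 1 / (2 * (q : ℝ) ^ 2) ↔
    Complex.normSq ((q : ℂ) * z - p) = z.im := by
  have hqR : (q : ℝ) ≠ 0 := by exact_mod_cast hq.ne'
  have hc : ((p / q : ℂ) + I / (2 * (q : ℂ) ^ 2)) =
      (((p : ℝ) / q : ℝ) : ℂ) + ((1 / (2 * (q : ℝ) ^ 2) : ℝ) : ℂ) * I := by
    push_cast; ring
  have h1 : Complex.normSq (z - ((p / q : ℂ) + I / (2 * (q : ℂ) ^ 2))) =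
      (z.re - (p : ℝ) / q) ^ 2 + (z.im - 1 / (2 * (q : ℝ) ^ 2)) ^ 2 := by
    rw [hc]
    simp only [Complex.normSq_apply, Complex.sub_re, Complex.sub_im, Complex.add_re,
      Complex.add_im, Complex.ofReal_re, Complex.ofReal_im, Complex.mul_re, Complex.mul_im,
      Complex.I_re, Complex.I_im, mul_zero, mul_one, zero_mul, sub_zero, zero_sub, add_zero,
      zero_add]
    ring
  have h2 : Complex.normSq ((q : ℂ) * z - p) = ((q : ℝ) * z.re - p) ^ 2 + ((q : ℝ) * z.im) ^ 2 := by
    simp only [Complex.normSq_apply, Complex.sub_re, Complex.sub_im, Complex.mul_re,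
      Complex.mul_im, Complex.intCast_re, Complex.intCast_im, mul_zero, mul_one, zero_mul,
      sub_zero, zero_sub, add_zero, zero_add]
    ring
  have habs : ‖z - ((p / q : ℂ) + I / (2 * (q : ℂ) ^ 2))‖ = 1 / (2 * (q : ℝ) ^ 2) ↔
      Complex.normSq (z - ((p / q : ℂ) + I / (2 * (q : ℂ) ^ 2))) = (1 / (2 * (q : ℝ) ^ 2)) ^ 2 := by
    rw [← Complex.sq_norm]
    constructor
    · intro h; rw [h]
    · intro h
      have h3 : (‖z - ((p / q : ℂ) + I / (2 * (q : ℂ) ^ 2))‖ - 1 / (2 * (q : ℝ) ^ 2)) *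
          (‖z - ((p / q : ℂ) + I / (2 * (q : ℂ) ^ 2))‖ + 1 / (2 * (q : ℝ) ^ 2)) = 0 := by
        linear_combination h
      have hr : (0:ℝ) < 1 / (2 * (q : ℝ) ^ 2) := by positivity
      rcases mul_eq_zero.mp h3 with h4 | h4
      · linarith
      · nlinarith [norm_nonneg (z - ((p / q : ℂ) + I / (2 * (q : ℂ) ^ 2)))]
  rw [habs, h1, h2]
  have key : (q:ℝ)^2 * (((z.re - (p:ℝ)/q)^2 + (z.im - 1/(2*(q:ℝ)^2))^2) - (1/(2*(q:ℝ)^2))^2)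
      = (((q:ℝ)*z.re - p)^2 + ((q:ℝ)*z.im)^2) - z.im := by
    field_simp; ring
  have hq2 : (q:ℝ)^2 ≠ 0 := pow_ne_zero _ hqR
  constructor
  · intro h
    have h0 : (q:ℝ)^2 * (((z.re - (p:ℝ)/q)^2 + (z.im - 1/(2*(q:ℝ)^2))^2) - (1/(2*(q:ℝ)^2))^2) = 0 := by
      rw [h]; ring
    have h5 := key ▸ h0
    linarith
  · intro h
    have h0 : (q:ℝ)^2 * (((z.re - (p:ℝ)/q)^2 + (z.im - 1/(2*(q:ℝ)^2))^2) - (1/(2*(q:ℝ)^2))^2) = 0 := by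
      rw [key, h]; ring
    rcases mul_eq_zero.mp h0 with h4 | h4
    · exact absurd h4 hq2
    · linarith

/-- The Möbius map `A = [[−q', p'], [q, −p]]` maps the Ford circle at `p/q`, with its
tangency point removed, bijectively onto the horizontal line `{w : Im w = 1}`. -/
theorem ford_circle_maps_to_line (p q p' q' : ℤ) (hq : 0 < q)
    (hdet : p * q' - p' * q = 1) :
    Set.InjOn (fun z : ℂ => (-(q' : ℂ) * z + p') / ((q : ℂ) * z - p))
      {z : ℂ | ‖z - ((p / q : ℂ) + I / (2 * (q : ℂ) ^ 2))‖ = 1 / (2 * (q : ℝ) ^ 2)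
        ∧ z ≠ (p / q : ℂ)} ∧
    (fun z : ℂ => (-(q' : ℂ) * z + p') / ((q : ℂ) * z - p)) ''
      {z : ℂ | ‖z - ((p / q : ℂ) + I / (2 * (q : ℂ) ^ 2))‖ = 1 / (2 * (q : ℝ) ^ 2)
        ∧ z ≠ (p / q : ℂ)}
      = {w : ℂ | w.im = 1} := by
  have hqR : (q : ℝ) ≠ 0 := by exact_mod_cast hq.ne'
  have hqC : (q : ℂ) ≠ 0 := by exact_mod_cast hqR
  have hdetC : (p : ℂ) * q' - (p' : ℂ) * q = 1 := by exact_mod_cast hdet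
  have hdetR : (p : ℝ) * q' - (p' : ℝ) * q = 1 := by exact_mod_cast hdet
  have hDne : ∀ z : ℂ, z ≠ (p / q : ℂ) → (q : ℂ) * z - p ≠ 0 := by
    intro z hz h
    exact hz ((eq_div_iff hqC).mpr (by linear_combination h))
  constructor
  · -- injectivity
    intro z1 h1 z2 h2 heq
    simp only at heq
    have hD1 := hDne z1 h1.2
    have hD2 := hDne z2 h2.2
    rw [div_eq_div_iff hD1 hD2] at heq
    have h0 : ((p : ℂ) * q' - (p' : ℂ) * q) * (z1 - z2) = 0 := by linear_combination heq
    rw [hdetC, one_mul] at h0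
    exact sub_eq_zero.mp h0
  · ext w
    simp only [Set.mem_image, Set.mem_setOf_eq]
    constructor
    · rintro ⟨z, ⟨hc, hz⟩, rfl⟩
      have hn : Complex.normSq ((q : ℂ) * z - p) = z.im := (ford_circle_iff p q hq z).mp hc
      have hD := hDne z hz
      have him : z.im ≠ 0 := by
        intro h0
        exact hD (Complex.normSq_eq_zero.mp (by rw [hn, h0]))
      rw [Complex.div_im, hn]
      simp only [Complex.add_im, Complex.add_re, Complex.sub_re, Complex.sub_im, Complex.mul_re,
        Complex.mul_im, Complex.neg_re, Complex.neg_im, Complex.intCast_re, Complex.intCast_im,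
        mul_zero, mul_one, zero_mul, sub_zero, zero_sub, add_zero, zero_add, neg_zero]
      field_simp
      linear_combination hdetR
    · intro hw
      have hD2 : (q : ℂ) * w + q' ≠ 0 := by
        intro h
        have h2 := congrArg Complex.im h
        simp only [Complex.add_im, Complex.mul_im, Complex.intCast_im, Complex.intCast_re,
          Complex.zero_im, hw, mul_one, zero_mul, add_zero] at h2
        exact hqR h2
      set z : ℂ := ((p : ℂ) * w + p') / ((q : ℂ) * w + q') with hzdef
      have hz1 : (q : ℂ) * z - p = -1 / ((q : ℂ) * w + q') := by
        rw [hzdef]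
        field_simp
        linear_combination -hdetC
      have hnsD2 : Complex.normSq ((q : ℂ) * w + q') ≠ 0 := by
        simpa using hD2
      have hzim : z.im = 1 / Complex.normSq ((q : ℂ) * w + q') := by
        rw [hzdef, Complex.div_im]
        simp only [Complex.add_im, Complex.add_re, Complex.mul_re, Complex.mul_im,
          Complex.intCast_re, Complex.intCast_im, mul_zero, mul_one, zero_mul, sub_zero,
          add_zero, zero_add, hw]
        field_simp
        linear_combination hdetR
      have hcirc : Complex.normSq ((q : ℂ) * z - p) = z.im := by
        rw [hz1, hzim, map_div₀]
        simp
      have hzne : z ≠ (p / q : ℂ) := by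
        intro h
        have : z.im = 0 := by rw [h]; simp [Complex.div_im]
        rw [hzim, div_eq_zero_iff] at this
        rcases this with h1 | h1
        · norm_num at h1
        · exact hnsD2 h1
      refine ⟨z, ⟨(ford_circle_iff p q hq z).mpr hcirc, hzne⟩, ?_⟩
      have hDz : (q : ℂ) * z - p ≠ 0 := by
        rw [hz1]
        exact div_ne_zero (by norm_num) hD2
      show (-(q' : ℂ) * z + p') / ((q : ℂ) * z - p) = w
      rw [div_eq_iff hDz, hz1, hzdef]
      rw [mul_div_assoc', div_add' _ _ _ hD2, mul_div_assoc', div_left_inj' hD2]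
      linear_combination -w * hdetC
end

section
/- Let x, y be real numbers with 0 < x ≤ 1, y > 0 and x² + y² > 1. Then for every real number t there exists a real number X such that X²·x·(x² + y²) + 2X·(x² + y²) + x ≠ 0 and (y − X²·y·(x² + y²)) / (X²·x·(x² + y²) + 2X·(x² + y²) + x) = t; that is, the rational function F(X) = (y − X²y(x²+y²))/(X²x(x²+y²) + 2X(x²+y²) + x) attains every real value. -/
/-- For `z = x + iy` in the fundamental region `F*` (`0 < x ≤ 1`, `y > 0`, `x² + y² > 1`),
the rational function
`F(X) = (y − X²y(x² + y²)) / (X²x(x² + y²) + 2X(x² + y²) + x)` attains every real value. -/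
theorem slope_function_surjective (x y : ℝ) (hx0 : 0 < x) (hx1 : x ≤ 1) (hy : 0 < y)
    (hz : 1 < x ^ 2 + y ^ 2) (t : ℝ) :
    ∃ X : ℝ, X ^ 2 * x * (x ^ 2 + y ^ 2) + 2 * X * (x ^ 2 + y ^ 2) + x ≠ 0 ∧
      (y - X ^ 2 * y * (x ^ 2 + y ^ 2)) /
          (X ^ 2 * x * (x ^ 2 + y ^ 2) + 2 * X * (x ^ 2 + y ^ 2) + x) = t := by
  set r : ℝ := x ^ 2 + y ^ 2 with hrdef
  have hr : 0 < r := by positivity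
  -- key reduction: any root of the polynomial identity works
  have key : ∀ X : ℝ, y - X ^ 2 * y * r = t * (X ^ 2 * x * r + 2 * X * r + x) →
      X ^ 2 * x * r + 2 * X * r + x ≠ 0 ∧
      (y - X ^ 2 * y * r) / (X ^ 2 * x * r + 2 * X * r + x) = t := by
    intro X hX
    have hD : X ^ 2 * x * r + 2 * X * r + x ≠ 0 := by
      intro h
      rw [h, mul_zero] at hX
      -- numerator and denominator can't both vanish: from the numerator X² r = 1,
      -- from the denominator X r = -x, hence r = x², contradicting y > 0.
      have h1 : X ^ 2 * r = 1 := by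
        rcases mul_eq_zero.mp (show y * (X ^ 2 * r - 1) = 0 by linear_combination -hX) with
          h' | h'
        · exact absurd h' (ne_of_gt hy)
        · linarith
      have h2 : X * r = -x := by
        linear_combination (1 / 2) * h - (x / 2) * h1
      have h3 : x ^ 2 = r := by
        have : (X * r) ^ 2 = x ^ 2 := by rw [h2]; ring
        nlinarith [h1, this]
      nlinarith [hy, h3]
    exact ⟨hD, by rw [div_eq_iff hD]; linarith [hX]⟩
  by_cases h : y + t * x = 0
  · -- linear case: t = -y/x
    have ht : t ≠ 0 := by
      intro h0; rw [h0] at h; simp at h; nlinarith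
    have hd : 2 * t * r ≠ 0 := by
      intro h0
      rcases mul_eq_zero.mp h0 with h1 | h1
      · rcases mul_eq_zero.mp h1 with h2 | h2
        · norm_num at h2
        · exact ht h2
      · exact absurd h1 (ne_of_gt hr)
    set X : ℝ := (y - t * x) / (2 * t * r) with hXdef
    have hXeq : 2 * t * r * X = y - t * x := by
      rw [hXdef]; field_simp
    refine ⟨X, key X ?_⟩
    have hgoal : (2 * t * r) ^ 2 * (y - X ^ 2 * y * r) =
        (2 * t * r) ^ 2 * (t * (X ^ 2 * x * r + 2 * X * r + x)) := by
      linear_combination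
        (-((y + t * x) * r) * (2 * t * r) * X - (y + t * x) * r * (y - t * x)
            - (2 * t * r) * (2 * t * r)) * hXeq + (-(r * (y - t * x) ^ 2)) * h
    exact mul_left_cancel₀ (pow_ne_zero 2 hd) hgoal
  · -- quadratic case: use the quadratic formula with discriminant 4 r y² (t² + 1) > 0
    set s : ℝ := Real.sqrt (r * (t ^ 2 + 1)) with hsdef
    have hs : s ^ 2 = r * (t ^ 2 + 1) := Real.sq_sqrt (by positivity)
    have hd : (y + t * x) * r ≠ 0 := by
      intro h0
      rcases mul_eq_zero.mp h0 with h1 | h1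
      · exact h h1
      · exact absurd h1 (ne_of_gt hr)
    set X : ℝ := (t * r + y * s) / (-((y + t * x) * r)) with hXdef
    have hXeq : (y + t * x) * r * X = -(t * r + y * s) := by
      rw [hXdef]; field_simp
    refine ⟨X, key X ?_⟩
    have hgoal : ((y + t * x) * r) ^ 2 * (y - X ^ 2 * y * r) =
        ((y + t * x) * r) ^ 2 * (t * (X ^ 2 * x * r + 2 * X * r + x)) := by
      linear_combination
        (-(((y + t * x) * r) ^ 2) * X + (y + t * x) * r * (t * r + y * s)
            - 2 * t * r * ((y + t * x) * r)) * hXeq + (-(r * (y + t * x) * y ^ 2)) * hs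
    exact mul_left_cancel₀ (pow_ne_zero 2 hd) hgoal
end

section
/- Let n be a positive integer. There exists a matrix A ∈ SL(2,ℤ) such that the point A(i) = (a·i + b)/(c·i + d) has imaginary part 1/n and real part in the interval [0,1] if and only if there exist coprime integers c, d with n = c² + d². -/
open Complex

private lemma det_ne_both_zero {a b c d : ℤ} (h : a * d - b * c = 1) :
    ¬(c = 0 ∧ d = 0) := by
  rintro ⟨rfl, rfl⟩; simp at h

private lemma denom_ne {c d : ℤ} (h : ¬(c = 0 ∧ d = 0)) :
    ((c : ℂ) * I + (d : ℂ)) ≠ 0 := by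
  intro h0
  apply h
  constructor
  · have := congrArg Complex.im h0
    simp at this
    exact_mod_cast this
  · have := congrArg Complex.re h0
    simp at this
    exact_mod_cast this

private lemma sum_sq_pos {c d : ℤ} (h : ¬(c = 0 ∧ d = 0)) : 0 < c ^ 2 + d ^ 2 := by
  rcases lt_or_eq_of_le (by positivity : (0:ℤ) ≤ c ^ 2 + d ^ 2) with h1 | h1
  · exact h1
  · exfalso
    apply h
    constructor <;> nlinarith [sq_nonneg c, sq_nonneg d]

private lemma key (a b c d : ℤ) (h : a * d - b * c = 1) :
    (((a : ℂ)) * I + (b : ℂ)) / ((c : ℂ) * I + (d : ℂ))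
      = (((a * c + b * d : ℤ) : ℂ) + I) / (((c ^ 2 + d ^ 2 : ℤ)) : ℂ) := by
  have hcd := det_ne_both_zero h
  have h1 : ((c : ℂ) * I + (d : ℂ)) ≠ 0 := denom_ne hcd
  have h2 : (((c ^ 2 + d ^ 2 : ℤ)) : ℂ) ≠ 0 := by
    have := sum_sq_pos hcd
    exact_mod_cast this.ne'
  rw [div_eq_div_iff h1 h2]
  have hc : (a : ℂ) * d - b * c = 1 := by exact_mod_cast congrArg (Int.cast : ℤ → ℂ) h
  push_cast
  linear_combination ((d : ℂ) * I - c) * hc + (-(c : ℂ)) * Complex.I_sq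

/-- The horocycle segment `{Im z = 1/n, Re z ∈ [0,1]}` contains a `Γ(1)`-image of `i`
iff `n` is a proper (coprime) sum of two squares. -/
theorem image_of_i_on_horocycle (n : ℕ) (hn : 0 < n) :
    (∃ A : Matrix.SpecialLinearGroup (Fin 2) ℤ,
        ((((A.1 0 0 : ℤ) : ℂ) * I + ((A.1 0 1 : ℤ) : ℂ)) /
            (((A.1 1 0 : ℤ) : ℂ) * I + ((A.1 1 1 : ℤ) : ℂ))).im = 1 / n ∧
        ((((A.1 0 0 : ℤ) : ℂ) * I + ((A.1 0 1 : ℤ) : ℂ)) /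
            (((A.1 1 0 : ℤ) : ℂ) * I + ((A.1 1 1 : ℤ) : ℂ))).re ∈ Set.Icc (0 : ℝ) 1)
      ↔ ∃ c d : ℤ, IsCoprime c d ∧ (n : ℤ) = c ^ 2 + d ^ 2 := by
  constructor
  · rintro ⟨A, him, -⟩
    set a := A.1 0 0
    set b := A.1 0 1
    set c := A.1 1 0
    set d := A.1 1 1
    have hdet : a * d - b * c = 1 := by
      have := A.2
      rw [Matrix.det_fin_two] at this
      exact this
    refine ⟨c, d, ⟨-b, a, by linarith⟩, ?_⟩
    rw [key a b c d hdet] at him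
    have hm : 0 < c ^ 2 + d ^ 2 := sum_sq_pos (det_ne_both_zero hdet)
    have hcast : ((c ^ 2 + d ^ 2 : ℤ) : ℂ) = (((c ^ 2 + d ^ 2 : ℤ) : ℝ) : ℂ) := by push_cast; ring
    rw [hcast, Complex.div_ofReal_im] at him
    simp only [Complex.add_im, Complex.intCast_im, Complex.I_im, zero_add] at him
    have hmR : (0:ℝ) < ((c ^ 2 + d ^ 2 : ℤ) : ℝ) := by exact_mod_cast hm
    have hnR : (0:ℝ) < (n : ℝ) := by exact_mod_cast hn
    have : ((c ^ 2 + d ^ 2 : ℤ) : ℝ) = (n : ℝ) := by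
      have hp : (0:ℝ) < (c:ℝ) ^ 2 + (d:ℝ) ^ 2 := by exact_mod_cast hm
      field_simp at him
      push_cast at him ⊢
      linarith
    exact_mod_cast this.symm
  · rintro ⟨c, d, hco, hsum⟩
    obtain ⟨u, v, huv⟩ := hco
    set N : ℤ := v * c + (-u) * d with hN
    set q : ℤ := N / (n : ℤ) with hq
    set a : ℤ := v - q * c with ha
    set b : ℤ := -u - q * d with hb
    have hdet : a * d - b * c = 1 := by
      have : v * d + u * c = 1 := by linarith [huv]
      simp only [ha, hb]; ring_nf; linarith [huv]
    have hnz : (n : ℤ) ≠ 0 := by exact_mod_cast hn.ne'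
    have hN' : a * c + b * d = N % (n : ℤ) := by
      have e := Int.mul_ediv_add_emod N (n : ℤ)
      have h2 : a * c + b * d = N - q * (c ^ 2 + d ^ 2) := by simp only [ha, hb, hN]; ring
      rw [h2, ← hsum]
      linarith
    have hval : ((a : ℂ) * I + (b : ℂ)) / ((c : ℂ) * I + (d : ℂ))
        = (((N % (n : ℤ) : ℤ) : ℂ) + I) / (((n : ℝ)) : ℂ) := by
      rw [key a b c d hdet, hN']
      congr 1
      push_cast [← hsum]
      norm_num
    have h0 : 0 ≤ N % (n:ℤ) := Int.emod_nonneg N hnz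
    have h1 : N % (n:ℤ) < (n:ℤ) := Int.emod_lt_of_pos N (by exact_mod_cast hn)
    refine ⟨⟨!![a, b; c, d], by rw [Matrix.det_fin_two_of]; exact hdet⟩, ?_, ?_⟩
    · show (((a : ℂ) * I + (b : ℂ)) / ((c : ℂ) * I + (d : ℂ))).im = 1 / (n : ℝ)
      rw [hval, Complex.div_ofReal_im]
      simp
    · show (((a : ℂ) * I + (b : ℂ)) / ((c : ℂ) * I + (d : ℂ))).re ∈ Set.Icc (0:ℝ) 1
      rw [hval, Complex.div_ofReal_re]
      simp only [Complex.add_re, Complex.intCast_re, Complex.I_re, add_zero]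
      constructor
      · positivity
      · rw [div_le_one (by exact_mod_cast hn)]
        exact_mod_cast h1.le
end

section
/- Let m be a positive integer and ρ = 1/2 + i·√3/2. There exists a matrix A ∈ SL(2,ℤ) such that the point A(ρ) = (a·ρ + b)/(c·ρ + d) has imaginary part √3/(2m) and real part in the interval [0,1] if and only if there exist coprime integers c, d with m = c² + cd + d². -/
open Complex

noncomputable def rhoC : ℂ := (1 / 2 : ℂ) + I * (Real.sqrt 3 / 2 : ℝ)

lemma quot_im (a b c d : ℤ) (hN : ((c : ℝ) ^ 2 + c * d + d ^ 2 : ℝ) ≠ 0) :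
    (((a : ℂ) * rhoC + b) / ((c : ℂ) * rhoC + d)).im
      = ((a : ℝ) * d - b * c) * Real.sqrt 3 / (2 * ((c : ℝ) ^ 2 + c * d + d ^ 2)) := by
  have h3 : Real.sqrt 3 * Real.sqrt 3 = 3 := Real.mul_self_sqrt (by norm_num)
  rw [Complex.div_im]
  simp [rhoC, Complex.add_re, Complex.add_im, Complex.normSq_apply]
  rw [show ((c:ℝ) * 2⁻¹ + d) * ((c:ℝ) * 2⁻¹ + d) + c * (Real.sqrt 3 / 2) * (c * (Real.sqrt 3 / 2))
      = (c:ℝ) ^ 2 + c * d + d ^ 2 from by linear_combination ((c:ℝ) * c / 4) * h3]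
  field_simp
  ring

lemma quot_re (a b c d : ℤ) (hN : ((c : ℝ) ^ 2 + c * d + d ^ 2 : ℝ) ≠ 0) :
    (((a : ℂ) * rhoC + b) / ((c : ℂ) * rhoC + d)).re
      = (2 * ((a : ℝ) * c + b * d) + a * d + b * c) / (2 * ((c : ℝ) ^ 2 + c * d + d ^ 2)) := by
  have h3 : Real.sqrt 3 * Real.sqrt 3 = 3 := Real.mul_self_sqrt (by norm_num)
  rw [Complex.div_re]
  simp [rhoC, Complex.add_re, Complex.add_im, Complex.normSq_apply]
  rw [show ((c:ℝ) * 2⁻¹ + d) * ((c:ℝ) * 2⁻¹ + d) + c * (Real.sqrt 3 / 2) * (c * (Real.sqrt 3 / 2))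
      = (c:ℝ) ^ 2 + c * d + d ^ 2 from by linear_combination ((c:ℝ) * c / 4) * h3]
  field_simp
  congr 1
  linear_combination (a:ℝ) * c * h3

/-- The horocycle segment `{Im z = √3/(2m), Re z ∈ [0,1]}` contains a `Γ(1)`-image of
`ρ = 1/2 + i√3/2` iff `m` is a proper (coprime) value of the form `c² + cd + d²`. -/
theorem image_of_rho_on_horocycle (m : ℕ) (hm : 0 < m) :
    (∃ A : Matrix.SpecialLinearGroup (Fin 2) ℤ,
        ((((A.1 0 0 : ℤ) : ℂ) * ((1 / 2 : ℂ) + I * (Real.sqrt 3 / 2 : ℝ)) + ((A.1 0 1 : ℤ) : ℂ)) /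
            (((A.1 1 0 : ℤ) : ℂ) * ((1 / 2 : ℂ) + I * (Real.sqrt 3 / 2 : ℝ))
              + ((A.1 1 1 : ℤ) : ℂ))).im = Real.sqrt 3 / (2 * m) ∧
        ((((A.1 0 0 : ℤ) : ℂ) * ((1 / 2 : ℂ) + I * (Real.sqrt 3 / 2 : ℝ)) + ((A.1 0 1 : ℤ) : ℂ)) /
            (((A.1 1 0 : ℤ) : ℂ) * ((1 / 2 : ℂ) + I * (Real.sqrt 3 / 2 : ℝ))
              + ((A.1 1 1 : ℤ) : ℂ))).re ∈ Set.Icc (0 : ℝ) 1)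
      ↔ ∃ c d : ℤ, IsCoprime c d ∧ (m : ℤ) = c ^ 2 + c * d + d ^ 2 := by
  have hrho : ((1 / 2 : ℂ) + I * (Real.sqrt 3 / 2 : ℝ)) = rhoC := rfl
  have hm' : (0:ℝ) < m := by exact_mod_cast hm
  have hs : (0:ℝ) < Real.sqrt 3 := Real.sqrt_pos.mpr (by norm_num)
  constructor
  · rintro ⟨A, him, -⟩
    set a := A.1 0 0 with ha
    set b := A.1 0 1 with hb
    set c := A.1 1 0 with hc
    set d := A.1 1 1 with hd
    have hdet : a * d - b * c = 1 := by
      have h2 := A.2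
      rw [Matrix.det_fin_two] at h2
      exact h2
    have hcop : IsCoprime c d := ⟨-b, a, by linarith⟩
    have hcd : c ≠ 0 ∨ d ≠ 0 := by
      by_contra h
      push_neg at h
      rw [h.1, h.2] at hdet; simp at hdet
    have hNpos : 0 < c ^ 2 + c * d + d ^ 2 := by
      rcases hcd with h | h
      · have h1 : 1 ≤ |c| := Int.one_le_abs h
        nlinarith [sq_nonneg (c + 2 * d), _root_.sq_abs c]
      · have h1 : 1 ≤ |d| := Int.one_le_abs h
        nlinarith [sq_nonneg (2 * c + d), _root_.sq_abs d]
    have hNR : (0:ℝ) < (c:ℝ) ^ 2 + c * d + d ^ 2 := by exact_mod_cast hNpos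
    rw [hrho, quot_im a b c d hNR.ne'] at him
    have hd1 : ((a:ℝ) * d - b * c) = 1 := by exact_mod_cast hdet
    rw [hd1, one_mul] at him
    have hNm : ((c:ℝ) ^ 2 + c * d + d ^ 2) = m := by
      field_simp at him
      have h' : (c:ℝ) * (c + d) + d ^ 2 = c ^ 2 + c * d + d ^ 2 := by ring
      rw [h', div_eq_one_iff_eq hNR.ne'] at him
      linarith
    exact ⟨c, d, hcop, by exact_mod_cast hNm.symm⟩
  · rintro ⟨c, d, hcop, hmeq⟩
    obtain ⟨u, v, huv⟩ := hcop
    have hNR : (0:ℝ) < (c:ℝ) ^ 2 + c * d + d ^ 2 := by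
      have : ((m:ℤ) : ℝ) = ((c:ℝ) ^ 2 + c * d + d ^ 2) := by exact_mod_cast congrArg Int.cast hmeq
      rw [← this]; exact_mod_cast hm
    have hNm : ((c:ℝ) ^ 2 + c * d + d ^ 2) = m := by exact_mod_cast hmeq.symm
    set x0 : ℝ := (2 * ((v:ℝ) * c + (-u) * d) + v * d + (-u) * c) / (2 * m) with hx0
    set k : ℤ := ⌊x0⌋ with hk
    set a : ℤ := v - k * c with ha
    set b : ℤ := -u - k * d with hb
    have hdet : a * d - b * c = 1 := by rw [ha, hb]; linear_combination huv
    refine ⟨⟨!![a, b; c, d], by rw [Matrix.det_fin_two_of]; linarith⟩, ?_, ?_⟩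
    · show ((((a:ℤ):ℂ) * _ + ((b:ℤ):ℂ)) / (((c:ℤ):ℂ) * _ + ((d:ℤ):ℂ))).im = _
      rw [hrho, quot_im a b c d hNR.ne']
      rw [show ((a:ℝ) * d - b * c) = 1 from by exact_mod_cast hdet, one_mul, hNm]
    · show ((((a:ℤ):ℂ) * _ + ((b:ℤ):ℂ)) / (((c:ℤ):ℂ) * _ + ((d:ℤ):ℂ))).re ∈ _
      rw [hrho, quot_re a b c d hNR.ne']
      have hre : (2 * ((a : ℝ) * c + b * d) + a * d + b * c)
          / (2 * ((c : ℝ) ^ 2 + c * d + d ^ 2)) = x0 - k := by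
        rw [hNm, hx0, ha, hb]
        push_cast
        field_simp
        ring_nf
        linear_combination (-2 * (k:ℝ)) * hNm
      rw [hre]
      constructor
      · have := Int.floor_le x0; linarith
      · have := Int.lt_floor_add_one x0; linarith
end

section
/- Let n > 0 be a real number. If z ∈ ℂ satisfies both |z − i·(n² + 1)/2| = (n² + 1)/2 and |z − ((n² + 1)/n + i·(n² + 1)/(2n²))| = (n² + 1)/(2n²), then z = n + i. In other words, the horocycle anchored at 0 with euclidean radius (n² + 1)/2 and the horocycle anchored at (n² + 1)/n with euclidean radius (n² + 1)/(2n²) meet exactly at the single point n + i, at which they are tangent. -/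
open Complex

lemma abs_eq_iff_normSq_eq (z : ℂ) (r : ℝ) (hr : 0 ≤ r) :
    ‖z‖ = r ↔ Complex.normSq z = r ^ 2 := by
  constructor
  · intro h
    rw [← Complex.sq_norm, h]
  · intro h
    rw [Complex.norm_def, h, sq, Real.sqrt_mul_self hr]

/-- The horocycle anchored at `0` with euclidean radius `(n² + 1)/2` and the horocycle
anchored at `(n² + 1)/n` with euclidean radius `(n² + 1)/(2n²)` meet exactly at the single
point `n + i` (where they are tangent). -/
theorem horocycles_tangent (n : ℝ) (hn : 0 < n) :
    {z : ℂ | ‖z - I * (((n ^ 2 + 1) / 2 : ℝ) : ℂ)‖ = (n ^ 2 + 1) / 2} ∩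
      {z : ℂ | ‖z - ((((n ^ 2 + 1) / n : ℝ) : ℂ)
          + I * (((n ^ 2 + 1) / (2 * n ^ 2) : ℝ) : ℂ))‖ = (n ^ 2 + 1) / (2 * n ^ 2)}
      = {(n : ℂ) + I} := by
  have hn0 : n ≠ 0 := hn.ne'
  have hs : (0:ℝ) < n ^ 2 + 1 := by positivity
  have hr1 : (0:ℝ) ≤ (n ^ 2 + 1) / 2 := by positivity
  have hr2 : (0:ℝ) ≤ (n ^ 2 + 1) / (2 * n ^ 2) := by positivity
  ext z
  simp only [Set.mem_inter_iff, Set.mem_setOf_eq, Set.mem_singleton_iff,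
    abs_eq_iff_normSq_eq _ _ hr1, abs_eq_iff_normSq_eq _ _ hr2,
    Complex.normSq_apply, Complex.sub_re, Complex.sub_im, Complex.add_re, Complex.add_im,
    Complex.mul_re, Complex.mul_im, Complex.I_re, Complex.I_im, Complex.ofReal_re,
    Complex.ofReal_im]
  constructor
  · rintro ⟨h1, h2⟩
    have hA : z.re ^ 2 + z.im ^ 2 - (n ^ 2 + 1) * z.im = 0 := by
      field_simp at h1
      nlinarith [h1]
    have hB : n ^ 2 * (z.re ^ 2 + z.im ^ 2) - 2 * n * (n ^ 2 + 1) * z.re + (n ^ 2 + 1) ^ 2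
        - (n ^ 2 + 1) * z.im = 0 := by
      field_simp at h2
      refine mul_left_cancel₀ (a := 16 * n ^ 8) (by positivity) ?_
      linear_combination (4 * n ^ 6) * h2
    have hL' : (n ^ 2 + 1) * (2 * n * z.re - (n ^ 2 - 1) * z.im - (n ^ 2 + 1)) = 0 := by
      linear_combination n ^ 2 * hA - hB
    have hL : 2 * n * z.re - (n ^ 2 - 1) * z.im - (n ^ 2 + 1) = 0 := by
      rcases mul_eq_zero.mp hL' with h | h
      · exact absurd h hs.ne'
      · exact h
    have hy2 : ((n ^ 2 + 1) * (z.im - 1)) ^ 2 = 0 := by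
      linear_combination (4 * n ^ 2) * hA -
        (2 * n * z.re + (n ^ 2 - 1) * z.im + (n ^ 2 + 1)) * hL
    have hy : z.im = 1 := by
      have := pow_eq_zero_iff (n := 2) (by norm_num) |>.mp hy2
      rcases mul_eq_zero.mp this with h | h
      · exact absurd h hs.ne'
      · linarith
    have hx : z.re = n := by
      rw [hy] at hL
      have h2n : 2 * n * z.re = 2 * n * n := by linear_combination hL
      exact mul_left_cancel₀ (by positivity : (2:ℝ) * n ≠ 0) h2n
    apply Complex.ext
    · simpa using hx
    · simpa using hy
  · rintro rfl
    simp only [Complex.add_re, Complex.add_im, Complex.ofReal_re, Complex.ofReal_im,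
      Complex.I_re, Complex.I_im]
    refine ⟨?_, ?_⟩ <;> · field_simp; ring
end
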